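/- If a standard balanced tableau R has entry i with i−1 directly related as follows: one of i−1, i+1 lies in the same column above i and the other lies in the same row to the right of i, then exchanging i−1 and i+1 yields again a standard balanced tableau. -/

import Mathlib

/-- The Coxeter length of `w`: the number of inversion pairs. -/
def invCount {n : ℕ} (w : Equiv.Perm (Fin n)) : ℕ :=
  (Finset.univ.filter fun p : Fin n × Fin n => p.1 < p.2 ∧ w p.2 < w p.1).card

/-- The Rothe diagram of `w` (0-indexed): the cells `(i, w j)` for inversions `i < j`,
`w j < w i`, as a subset of `ℕ × ℕ` (first coordinate the row, drawn with row `0` at the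
bottom so that "above" means larger first coordinate; second coordinate the column). -/
def RotheD (n : ℕ) (w : Equiv.Perm (Fin n)) : Finset (ℕ × ℕ) :=
  (Finset.univ.filter fun p : Fin n × Fin n => p.1 < p.2 ∧ w p.2 < w p.1).image
    fun p => ((p.1 : ℕ), (w p.2 : ℕ))

/-- A standard balanced tableau on a diagram `D`: a bijective filling of the cells of `D`
by `1, …, |D|` such that for every cell, the number of larger entries to its right in its
row equals the number of smaller entries above it in its column. -/
def IsSBT (D : Finset (ℕ × ℕ)) (T : ℕ × ℕ → ℕ) : Prop :=
  Set.InjOn T ↑D ∧ D.image T = Finset.Icc 1 D.card ∧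
  ∀ x ∈ D, (D.filter fun y => y.1 = x.1 ∧ x.2 < y.2 ∧ T x < T y).card
    = (D.filter fun y => y.2 = x.2 ∧ x.1 < y.1 ∧ T y < T x).card

/-
Write `i = k + 1`. Swapping the labels `k` and `k + 2` changes the relative order of two entries
only when both lie in `{k, k + 1, k + 2}`, i.e. only for pairs among the cells `x`, `y`, `z`
carrying these labels. Since `y` and `z` lie neither in a common row nor in a common column, the
balance condition can change only at `x`, whose hook (the cells to its right in its row and
above it in its column) contains both. There the swap moves `z` out of (or into) the larger
entries to the right of `x` and `y` out of (or into) the smaller entries above `x`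
simultaneously, so both sides of the balance equation drop (or grow) by one.
-/

open Finset

theorem Finset.card_filter_add_one_of_iff_of_ne {α : Type*} [DecidableEq α] {s : Finset α}
    {p q : α → Prop} [DecidablePred p] [DecidablePred q] {a : α} (ha : a ∈ s) (hpa : p a)
    (hqa : ¬q a) (h : ∀ b ∈ s, b ≠ a → (q b ↔ p b)) : #(s.filter q) + 1 = #(s.filter p) := by
  have hfilter : s.filter q = (s.filter p).erase a := by
    ext b
    simp only [mem_filter, mem_erase]
    by_cases hba : b = a
    · subst hba; tauto
    · have := h b; tauto
  rw [hfilter, card_erase_add_one (mem_filter.2 ⟨ha, hpa⟩)]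

theorem Finset.image_swap_of_mem {α : Type*} [DecidableEq α] {s : Finset α} {a b : α}
    (ha : a ∈ s) (hb : b ∈ s) : s.image (Equiv.swap a b) = s := by
  have hmap : s.map (Equiv.swap a b).toEmbedding = s := map_perm fun c hc => by
    obtain ⟨-, rfl | rfl⟩ := Equiv.swap_apply_ne_self_iff.1 hc <;> assumption
  simpa [map_eq_image] using hmap

theorem Nat.swap_lt_swap_iff {k a b : ℕ} (h : (a < k ∨ k + 2 < a) ∨ (b < k ∨ k + 2 < b)) :
    Equiv.swap k (k + 2) a < Equiv.swap k (k + 2) b ↔ a < b := by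
  simp only [Equiv.swap_apply_def]
  split_ifs <;> omega

section BalancedTableau

variable {D : Finset (ℕ × ℕ)}

def rightLargerCount (D : Finset (ℕ × ℕ)) (T : ℕ × ℕ → ℕ) (c : ℕ × ℕ) : ℕ :=
  #(D.filter fun d => d.1 = c.1 ∧ c.2 < d.2 ∧ T c < T d)

def aboveSmallerCount (D : Finset (ℕ × ℕ)) (T : ℕ × ℕ → ℕ) (c : ℕ × ℕ) : ℕ :=
  #(D.filter fun d => d.2 = c.2 ∧ c.1 < d.1 ∧ T d < T c)

theorem isSBT_iff {T : ℕ × ℕ → ℕ} :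
    IsSBT D T ↔ Set.InjOn T D ∧ D.image T = Icc 1 #D ∧
      ∀ c ∈ D, rightLargerCount D T c = aboveSmallerCount D T c :=
  Iff.rfl

theorem rightLargerCount_comp {T : ℕ × ℕ → ℕ} {c : ℕ × ℕ} (f : ℕ → ℕ)
    (h : ∀ d ∈ D, d.1 = c.1 → c.2 < d.2 → (f (T c) < f (T d) ↔ T c < T d)) :
    rightLargerCount D (fun u => f (T u)) c = rightLargerCount D T c :=
  congrArg card <| filter_congr fun d hd =>
    and_congr_right fun h₁ => and_congr_right fun h₂ => h d hd h₁ h₂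

theorem aboveSmallerCount_comp {T : ℕ × ℕ → ℕ} {c : ℕ × ℕ} (f : ℕ → ℕ)
    (h : ∀ d ∈ D, d.2 = c.2 → c.1 < d.1 → (f (T d) < f (T c) ↔ T d < T c)) :
    aboveSmallerCount D (fun u => f (T u)) c = aboveSmallerCount D T c :=
  congrArg card <| filter_congr fun d hd =>
    and_congr_right fun h₁ => and_congr_right fun h₂ => h d hd h₁ h₂

variable {g : ℕ × ℕ → ℕ} {k : ℕ} {x y z : ℕ × ℕ}

theorem lt_or_gt_of_injOn (hg : Set.InjOn g D) (hx : x ∈ D) (hy : y ∈ D) (hz : z ∈ D)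
    (hgx : g x = k + 1) (hvals : (g y = k ∧ g z = k + 2) ∨ (g y = k + 2 ∧ g z = k))
    {d : ℕ × ℕ} (hd : d ∈ D) (hdx : d ≠ x) (hdy : d ≠ y) (hdz : d ≠ z) :
    g d < k ∨ k + 2 < g d := by
  have := hg.ne hd hx hdx
  have := hg.ne hd hy hdy
  have := hg.ne hd hz hdz
  omega

theorem rightLargerCount_swap_add_one (hg : Set.InjOn g D) (hx : x ∈ D) (hy : y ∈ D)
    (hz : z ∈ D) (hgx : g x = k + 1) (hgy : g y = k) (hgz : g z = k + 2)
    (hyrow : y.1 ≠ x.1) (hzrow : z.1 = x.1) (hzright : x.2 < z.2) :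
    rightLargerCount D (fun u => Equiv.swap k (k + 2) (g u)) x + 1 = rightLargerCount D g x := by
  refine card_filter_add_one_of_iff_of_ne hz ⟨hzrow, hzright, by omega⟩ ?_ ?_
  · simp [hgx, hgz, Equiv.swap_apply_of_ne_of_ne]
  · rintro d hd hdz
    refine and_congr_right fun h₁ => and_congr_right fun h₂ => Nat.swap_lt_swap_iff (Or.inr ?_)
    exact lt_or_gt_of_injOn hg hx hy hz hgx (.inl ⟨hgy, hgz⟩) hd (by rintro rfl; omega)
      (by rintro rfl; omega) hdz

theorem aboveSmallerCount_swap_add_one (hg : Set.InjOn g D) (hx : x ∈ D) (hy : y ∈ D)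
    (hz : z ∈ D) (hgx : g x = k + 1) (hgy : g y = k) (hgz : g z = k + 2)
    (hycol : y.2 = x.2) (hyabove : x.1 < y.1) (hzcol : z.2 ≠ x.2) :
    aboveSmallerCount D (fun u => Equiv.swap k (k + 2) (g u)) x + 1 =
      aboveSmallerCount D g x := by
  refine card_filter_add_one_of_iff_of_ne hy ⟨hycol, hyabove, by omega⟩ ?_ ?_
  · simp [hgx, hgy, Equiv.swap_apply_of_ne_of_ne]
  · rintro d hd hdy
    refine and_congr_right fun h₁ => and_congr_right fun h₂ => Nat.swap_lt_swap_iff (Or.inl ?_)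
    exact lt_or_gt_of_injOn hg hx hy hz hgx (.inl ⟨hgy, hgz⟩) hd (by rintro rfl; omega) hdy
      (by rintro rfl; omega)

theorem lt_or_gt_of_mem_hook (hg : Set.InjOn g D) (hx : x ∈ D) (hy : y ∈ D) (hz : z ∈ D)
    (hgx : g x = k + 1) (hvals : (g y = k ∧ g z = k + 2) ∨ (g y = k + 2 ∧ g z = k))
    (hycol : y.2 = x.2) (hyabove : x.1 < y.1) (hzrow : z.1 = x.1) (hzright : x.2 < z.2)
    {c : ℕ × ℕ} (hc : c ∈ D) (hcx : c ≠ x) :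
    ∀ d ∈ D, (d.1 = c.1 ∧ c.2 < d.2) ∨ (d.2 = c.2 ∧ c.1 < d.1) →
      (g c < k ∨ k + 2 < g c) ∨ (g d < k ∨ k + 2 < g d) := by
  intro d hd hcd
  by_cases hcyz : c = y ∨ c = z
  · -- the hooks of `y` and `z` contain none of `x`, `y`, `z`
    refine .inr (lt_or_gt_of_injOn hg hx hy hz hgx hvals hd ?_ ?_ ?_) <;>
      rcases hcyz with rfl | rfl <;> rintro rfl <;> omega
  · obtain ⟨hcy, hcz⟩ := not_or.1 hcyz
    exact .inl (lt_or_gt_of_injOn hg hx hy hz hgx hvals hc hcx hcy hcz)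

theorem rightLargerCount_swap_eq_aboveSmallerCount_swap (hg : Set.InjOn g D) (hx : x ∈ D)
    (hy : y ∈ D) (hz : z ∈ D) (hgx : g x = k + 1)
    (hvals : (g y = k ∧ g z = k + 2) ∨ (g y = k + 2 ∧ g z = k))
    (hycol : y.2 = x.2) (hyabove : x.1 < y.1) (hzrow : z.1 = x.1) (hzright : x.2 < z.2)
    (hbal : rightLargerCount D g x = aboveSmallerCount D g x) :
    rightLargerCount D (fun u => Equiv.swap k (k + 2) (g u)) x =
      aboveSmallerCount D (fun u => Equiv.swap k (k + 2) (g u)) x := by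
  rcases hvals with ⟨hgy, hgz⟩ | ⟨hgy, hgz⟩
  · have hright := rightLargerCount_swap_add_one hg hx hy hz hgx hgy hgz (by omega) hzrow hzright
    have habove := aboveSmallerCount_swap_add_one hg hx hy hz hgx hgy hgz hycol hyabove (by omega)
    omega
  · -- the swapped labelling is in the first case, and swapping it back gives `g`
    set σ := Equiv.swap k (k + 2)
    have hσg : (fun u => σ (σ (g u))) = g := funext fun u => Equiv.swap_apply_self _ _ _
    have hσx : σ (g x) = k + 1 := by simp [σ, hgx, Equiv.swap_apply_of_ne_of_ne]
    have hσy : σ (g y) = k := by simp [σ, hgy]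
    have hσz : σ (g z) = k + 2 := by simp [σ, hgz]
    have hσinj : Set.InjOn (fun u => σ (g u)) D := σ.injective.comp_injOn hg
    have hright := rightLargerCount_swap_add_one hσinj hx hy hz hσx hσy hσz (by omega) hzrow
      hzright
    have habove := aboveSmallerCount_swap_add_one hσinj hx hy hz hσx hσy hσz hycol hyabove
      (by omega)
    rw [hσg] at hright habove
    omega

theorem IsSBT.yangBaxter_swap {T : ℕ × ℕ → ℕ} (hT : IsSBT D T) (hx : x ∈ D) (hy : y ∈ D)
    (hz : z ∈ D) (hTx : T x = k + 1)
    (hvals : (T y = k ∧ T z = k + 2) ∨ (T y = k + 2 ∧ T z = k))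
    (hycol : y.2 = x.2) (hyabove : x.1 < y.1) (hzrow : z.1 = x.1) (hzright : x.2 < z.2) :
    IsSBT D (fun u => Equiv.swap k (k + 2) (T u)) := by
  obtain ⟨hinj, himg, hbal⟩ := isSBT_iff.1 hT
  refine isSBT_iff.2 ⟨(Equiv.injective _).comp_injOn hinj, ?_, fun c hc => ?_⟩
  · have hmem : ∀ u ∈ D, T u ∈ Icc 1 #D := fun u hu => himg ▸ mem_image_of_mem T hu
    change D.image (Equiv.swap k (k + 2) ∘ T) = _
    rw [← image_image, himg]
    rcases hvals with ⟨hTy, hTz⟩ | ⟨hTy, hTz⟩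
    · exact image_swap_of_mem (hTy ▸ hmem y hy) (hTz ▸ hmem z hz)
    · exact image_swap_of_mem (hTz ▸ hmem z hz) (hTy ▸ hmem y hy)
  by_cases hcx : c = x
  · subst hcx
    exact rightLargerCount_swap_eq_aboveSmallerCount_swap hinj hc hy hz hTx hvals hycol hyabove
      hzrow hzright (hbal c hc)
  · have hfar := lt_or_gt_of_mem_hook hinj hx hy hz hTx hvals hycol hyabove hzrow hzright hc hcx
    calc rightLargerCount D (fun u => Equiv.swap k (k + 2) (T u)) c
        = rightLargerCount D T c := rightLargerCount_comp _ fun d hd h₁ h₂ =>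
          Nat.swap_lt_swap_iff (hfar d hd (.inl ⟨h₁, h₂⟩))
      _ = aboveSmallerCount D T c := hbal c hc
      _ = aboveSmallerCount D (fun u => Equiv.swap k (k + 2) (T u)) c :=
          (aboveSmallerCount_comp _ fun d hd h₁ h₂ =>
            Nat.swap_lt_swap_iff (hfar d hd (.inr ⟨h₁, h₂⟩)).symm).symm

end BalancedTableau

theorem sbt_yangBaxter_general (n : ℕ) (w : Equiv.Perm (Fin n)) (T : ℕ × ℕ → ℕ) (i : ℕ)
    (hT : IsSBT (RotheD n w) T)
    (x y z : ℕ × ℕ) (hx : x ∈ RotheD n w) (hy : y ∈ RotheD n w) (hz : z ∈ RotheD n w)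
    (hTx : T x = i)
    (hvals : (T y = i - 1 ∧ T z = i + 1) ∨ (T y = i + 1 ∧ T z = i - 1))
    (hycol : y.2 = x.2) (hyabove : x.1 < y.1)
    (hzrow : z.1 = x.1) (hzright : x.2 < z.2) :
    IsSBT (RotheD n w)
      (fun u => if T u = i - 1 then i + 1 else if T u = i + 1 then i - 1 else T u) := by
  have hi : 1 ≤ i := by
    have := hT.2.1 ▸ mem_image_of_mem T hx
    rw [hTx, mem_Icc] at this
    exact this.1
  obtain ⟨k, rfl⟩ : ∃ k, i = k + 1 := ⟨i - 1, by omega⟩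
  simp only [Nat.add_sub_cancel, add_assoc, Nat.reduceAdd] at hvals ⊢
  simpa only [Equiv.swap_apply_def] using
    hT.yangBaxter_swap hx hy hz hTx hvals hycol hyabove hzrow hzright

/-- If one of `i-1`, `i+1` lies in the same column above `i` and the other lies in the
same row to the right of `i`, then exchanging `i-1` and `i+1` in a standard balanced
tableau yields a standard balanced tableau. -/
theorem sbt_yangBaxter (n : ℕ) (w : Equiv.Perm (Fin n)) (T : ℕ × ℕ → ℕ) (i : ℕ)
    (hT : IsSBT (RotheD n w) T) (hi : 2 ≤ i)
    (x y z : ℕ × ℕ) (hx : x ∈ RotheD n w) (hy : y ∈ RotheD n w) (hz : z ∈ RotheD n w)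
    (hTx : T x = i)
    (hvals : (T y = i - 1 ∧ T z = i + 1) ∨ (T y = i + 1 ∧ T z = i - 1))
    (hycol : y.2 = x.2) (hyabove : x.1 < y.1)
    (hzrow : z.1 = x.1) (hzright : x.2 < z.2) :
    IsSBT (RotheD n w)
      (fun u => if T u = i - 1 then i + 1 else if T u = i + 1 then i - 1 else T u) :=
  sbt_yangBaxter_general n w T i hT x y z hx hy hz hTx hvals hycol hyabove hzrow hzright
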